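/- For α = 1/2 with both saturating forms, if 0 < q̄ < 1/√(η·ρ) then x̂₁ = q̄/(1 − ηρ·q̄²)·(√(w₂/w₁) + η·q̄) and x̂₂ = q̄/(1 − ηρ·q̄²)·(√(w₁/w₂) + ρ·q̄) satisfy the constraint (x₂/(1+η x₂))^(1/2)·(x₁/(1+ρ x₁))^(1/2) = q̄, the minimum cost is q̄/(1 − ηρ·q̄²)·(2√(w₁w₂) + (w₁η + w₂ρ)·q̄), and no output q̄ ≥ 1/√(ηρ) is achievable by any x₁, x₂ > 0. -/

import Mathlib

/-! In the coordinates `A = D a - q² η`, `B = D b - q² ρ` with `D = 1 - η ρ q²`, the output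
constraint becomes the hyperbola `A B = q²` and the cost `w₁ a + w₂ b` becomes
`(w₁ A + w₂ B + q² (w₁ η + w₂ ρ)) / D`. Positivity of `a, b` rules out the negative branch of the
hyperbola, and on the positive branch AM–GM gives `w₁ A + w₂ B ≥ 2 q √(w₁ w₂)`, with equality at
`A = q √(w₂/w₁)`, `B = q √(w₁/w₂)`, i.e. at `(x̂₁, x̂₂)`. Outputs `q ≥ 1/√(ηρ)` are out of reach
because each saturating factor `x / (1 + η x)` stays below `1/η`. -/

open Real

lemma mul_sq_lt_one_of_lt_one_div_sqrt {c q : ℝ} (hc : 0 < c) (hq : 0 ≤ q) (hqc : q < 1 / √c) :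
    c * q ^ 2 < 1 := by
  rw [lt_div_iff₀ (sqrt_pos.2 hc)] at hqc
  have := pow_lt_one₀ (by positivity) hqc two_ne_zero
  rwa [mul_pow, sq_sqrt hc.le, mul_comm] at this

lemma sqrt_mul_sqrt_eq_iff {u v q : ℝ} (hu : 0 ≤ u) (hv : 0 ≤ v) (hq : 0 ≤ q) :
    √u * √v = q ↔ u * v = q ^ 2 := by
  rw [← sqrt_mul hu, sqrt_eq_iff_eq_sq (mul_nonneg hu hv) hq]

lemma div_mul_div_eq_sq_iff {η ρ q a b : ℝ} (ha : 1 + ρ * a ≠ 0) (hb : 1 + η * b ≠ 0)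
    (hD : 1 - η * ρ * q ^ 2 ≠ 0) :
    b / (1 + η * b) * (a / (1 + ρ * a)) = q ^ 2 ↔
      ((1 - η * ρ * q ^ 2) * a - q ^ 2 * η) * ((1 - η * ρ * q ^ 2) * b - q ^ 2 * ρ) = q ^ 2 := by
  have hfactor : ((1 - η * ρ * q ^ 2) * a - q ^ 2 * η) * ((1 - η * ρ * q ^ 2) * b - q ^ 2 * ρ) - q ^ 2
      = (1 - η * ρ * q ^ 2) * (b * a - q ^ 2 * ((1 + η * b) * (1 + ρ * a))) := by ring
  rw [div_mul_div_comm, div_eq_iff (mul_ne_zero hb ha), ← sub_eq_zero, ← mul_right_inj' hD,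
    mul_zero, ← hfactor, sub_eq_zero]

lemma pos_and_pos_of_mul_pos_of_le_mul {A B c d : ℝ} (hA : -c < A) (hB : -d < B)
    (hAB : 0 < A * B) (hcd : c * d ≤ A * B) : 0 < A ∧ 0 < B := by
  rcases pos_and_pos_or_neg_and_neg_of_mul_pos hAB with h | ⟨hA', hB'⟩
  · exact h
  · have : (-A) * (-B) < c * d :=
      mul_lt_mul'' (by linarith) (by linarith) (neg_nonneg.2 hA'.le) (neg_nonneg.2 hB'.le)
    linarith

lemma two_mul_mul_sqrt_mul_le_add {w₁ w₂ A B q : ℝ} (hw₁ : 0 ≤ w₁) (hw₂ : 0 ≤ w₂) (hA : 0 ≤ A)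
    (hB : 0 ≤ B) (hq : 0 ≤ q) (hAB : A * B = q ^ 2) : 2 * q * √(w₁ * w₂) ≤ w₁ * A + w₂ * B := by
  have h := two_mul_le_add_sq √(w₁ * A) √(w₂ * B)
  rw [sq_sqrt (mul_nonneg hw₁ hA), sq_sqrt (mul_nonneg hw₂ hB), mul_assoc,
    ← sqrt_mul (mul_nonneg hw₁ hA), mul_mul_mul_comm, hAB, sqrt_mul (mul_nonneg hw₁ hw₂),
    sqrt_sq hq] at h
  linarith

lemma mul_sqrt_div_self {x y : ℝ} (hx : 0 < x) : x * √(y / x) = √(x * y) := by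
  nth_rw 1 [← sqrt_sq hx.le]
  rw [← sqrt_mul (sq_nonneg x)]
  congr 1
  field_simp

lemma div_one_add_mul_lt_inv {η x : ℝ} (hη : 0 < η) (hx : 0 ≤ x) : x / (1 + η * x) < η⁻¹ := by
  rw [div_lt_iff₀ (by positivity), inv_mul_eq_div, lt_div_iff₀ hη]
  linarith

lemma sqrt_mul_sqrt_lt_one_div_sqrt_mul {η ρ u v : ℝ} (hu : 0 ≤ u) (hv : 0 ≤ v)
    (huη : u < η⁻¹) (hvρ : v < ρ⁻¹) : √u * √v < 1 / √(η * ρ) := by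
  rw [← sqrt_mul hu, one_div, ← sqrt_inv, mul_inv]
  exact sqrt_lt_sqrt (mul_nonneg hu hv) (mul_lt_mul'' huη hvρ hu hv)

/-- with both saturating forms (η, ρ > 0), the given x̂₁, x̂₂ are
feasible and cost-minimizing for 0 < q̄ < 1/√(ηρ), with the stated minimum cost,
and no output q̄ ≥ 1/√(ηρ) is achievable. -/
theorem doubly_saturating_optimum (w₁ w₂ η ρ q : ℝ)
    (hw₁ : 0 < w₁) (hw₂ : 0 < w₂) (hη : 0 < η) (hρ : 0 < ρ)
    (hq : 0 < q) (hq2 : q < 1 / Real.sqrt (η * ρ)) :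
    let D : ℝ := 1 - η * ρ * q ^ 2
    let x₁ : ℝ := q / D * (Real.sqrt (w₂ / w₁) + η * q)
    let x₂ : ℝ := q / D * (Real.sqrt (w₁ / w₂) + ρ * q)
    let f : ℝ → ℝ → ℝ := fun a b =>
      Real.sqrt (b / (1 + η * b)) * Real.sqrt (a / (1 + ρ * a))
    f x₁ x₂ = q ∧
    (∀ a b : ℝ, 0 < a → 0 < b → f a b = q → w₁ * x₁ + w₂ * x₂ ≤ w₁ * a + w₂ * b) ∧
    w₁ * x₁ + w₂ * x₂ = q / D * (2 * Real.sqrt (w₁ * w₂) + (w₁ * η + w₂ * ρ) * q) ∧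
    (∀ q' ≥ 1 / Real.sqrt (η * ρ), ¬ ∃ a b : ℝ, 0 < a ∧ 0 < b ∧ f a b = q') := by
  intro D x₁ x₂ f
  have hD : 0 < D := sub_pos.2 (mul_sq_lt_one_of_lt_one_div_sqrt (mul_pos hη hρ) hq.le hq2)
  have constraint : ∀ a b, 0 ≤ a → 0 ≤ b →
      (f a b = q ↔ (D * a - q ^ 2 * η) * (D * b - q ^ 2 * ρ) = q ^ 2) := fun a b ha hb => by
    rw [← div_mul_div_eq_sq_iff (by positivity) (by positivity) hD.ne']
    exact sqrt_mul_sqrt_eq_iff (by positivity) (by positivity) hq.le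
  have cost : ∀ a b, w₁ * a + w₂ * b
      = (w₁ * (D * a - q ^ 2 * η) + w₂ * (D * b - q ^ 2 * ρ) + q ^ 2 * (w₁ * η + w₂ * ρ)) / D :=
    fun a b => by field_simp; ring
  set s := √(w₂ / w₁)
  set t := √(w₁ / w₂)
  have hs : w₁ * s = √(w₁ * w₂) := mul_sqrt_div_self hw₁
  have ht : w₂ * t = √(w₁ * w₂) := by rw [mul_comm w₁]; exact mul_sqrt_div_self hw₂
  have hx₁ : D * x₁ - q ^ 2 * η = q * s := by simp only [x₁]; field_simp; ring
  have hx₂ : D * x₂ - q ^ 2 * ρ = q * t := by simp only [x₂]; field_simp; ring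
  refine ⟨?_, fun a b ha hb hab => ?_, ?_, ?_⟩
  · have hst : s * t = 1 := by
      rw [← sqrt_mul (by positivity), div_mul_div_comm, mul_comm w₂, div_self (by positivity),
        sqrt_one]
    rw [constraint x₁ x₂ (by positivity) (by positivity), hx₁, hx₂]
    linear_combination q ^ 2 * hst
  · have hAB := (constraint a b ha.le hb.le).1 hab
    obtain ⟨hA, hB⟩ := pos_and_pos_of_mul_pos_of_le_mul (A := D * a - q ^ 2 * η)
      (B := D * b - q ^ 2 * ρ) (c := q ^ 2 * η) (d := q ^ 2 * ρ)
      (by linarith [mul_pos hD ha]) (by linarith [mul_pos hD hb]) (by rw [hAB]; positivity)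
      (by rw [hAB]; nlinarith)
    have amgm := two_mul_mul_sqrt_mul_le_add hw₁.le hw₂.le hA.le hB.le hq.le hAB
    rw [cost a b, cost x₁ x₂, hx₁, hx₂]
    gcongr (?_ + _) / _
    linear_combination amgm + q * hs + q * ht
  · rw [cost, hx₁, hx₂, div_mul_eq_mul_div]
    congr 1
    linear_combination q * hs + q * ht
  · rintro q' hq' ⟨a, b, ha, hb, rfl⟩
    exact hq'.not_gt (sqrt_mul_sqrt_lt_one_div_sqrt_mul (by positivity) (by positivity)
      (div_one_add_mul_lt_inv hη hb.le) (div_one_add_mul_lt_inv hρ ha.le))
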